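/- arXiv:2302.04088 — 4 statements merged into one kernel-verified Lean document; each statement's English description precedes it below -/
import Mathlib

section
/- For every c > 0 and all x, y ∈ E with c·‖x‖² < 1 and c·‖y‖² < 1, one has the norm identity ‖(−x) ⊕_c y‖² = ‖x − y‖² / (1 − 2c·⟨x,y⟩ + c²·‖x‖²·‖y‖²). -/
open scoped RealInnerProductSpace

variable {E : Type*} [NormedAddCommGroup E] [InnerProductSpace ℝ E] [FiniteDimensional ℝ E]

/-- Möbius addition on the Poincaré ball of curvature `-c`. -/
noncomputable def mobiusAdd (c : ℝ) (x y : E) : E :=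
  (1 / (1 + 2 * c * ⟪x, y⟫ + c ^ 2 * ‖x‖ ^ 2 * ‖y‖ ^ 2)) •
    ((1 + 2 * c * ⟪x, y⟫ + c * ‖y‖ ^ 2) • x + (1 - c * ‖x‖ ^ 2) • y)

/-! The squared norm of the numerator of `x ⊕_c y` is its denominator times `‖x + y‖²`, a
polynomial identity in `⟪x, y⟫`, `‖x‖²`, `‖y‖²`; so one factor of the denominator cancels, and
replacing `x` by `-x` gives the formula. -/

theorem one_div_sq_mul_mul_eq_div (d n : ℝ) : (1 / d) ^ 2 * (d * n) = n / d := by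
  rcases eq_or_ne d 0 with rfl | hd
  · simp
  · field_simp

section

variable {F : Type*} [NormedAddCommGroup F] [InnerProductSpace ℝ F]

theorem norm_smul_add_smul_sq_real (a b : ℝ) (x y : F) :
    ‖a • x + b • y‖ ^ 2 = a ^ 2 * ‖x‖ ^ 2 + 2 * (a * b) * ⟪x, y⟫ + b ^ 2 * ‖y‖ ^ 2 := by
  rw [norm_add_sq_real, norm_smul, norm_smul, real_inner_smul_left, real_inner_smul_right,
    Real.norm_eq_abs, Real.norm_eq_abs, mul_pow, mul_pow, sq_abs, sq_abs]
  ring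

theorem norm_sq_mobiusAdd_numerator (c : ℝ) (x y : F) :
    ‖(1 + 2 * c * ⟪x, y⟫ + c * ‖y‖ ^ 2) • x + (1 - c * ‖x‖ ^ 2) • y‖ ^ 2 =
      (1 + 2 * c * ⟪x, y⟫ + c ^ 2 * ‖x‖ ^ 2 * ‖y‖ ^ 2) * ‖x + y‖ ^ 2 := by
  rw [norm_smul_add_smul_sq_real, norm_add_sq_real]
  ring

theorem norm_sq_mobiusAdd (c : ℝ) (x y : F) :
    ‖mobiusAdd c x y‖ ^ 2 = ‖x + y‖ ^ 2 / (1 + 2 * c * ⟪x, y⟫ + c ^ 2 * ‖x‖ ^ 2 * ‖y‖ ^ 2) := by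
  rw [mobiusAdd, norm_smul, mul_pow, norm_sq_mobiusAdd_numerator, Real.norm_eq_abs, sq_abs,
    one_div_sq_mul_mul_eq_div]

end

theorem norm_sq_mobiusAdd_neg_general (c : ℝ) (x y : E) :
    ‖mobiusAdd c (-x) y‖ ^ 2 =
      ‖x - y‖ ^ 2 / (1 - 2 * c * ⟪x, y⟫ + c ^ 2 * ‖x‖ ^ 2 * ‖y‖ ^ 2) := by
  rw [norm_sq_mobiusAdd, neg_add_eq_sub, norm_sub_rev, inner_neg_left, norm_neg]
  congr 2
  ring

theorem norm_sq_mobiusAdd_neg (c : ℝ) (hc : 0 < c) (x y : E)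
    (hx : c * ‖x‖ ^ 2 < 1) (hy : c * ‖y‖ ^ 2 < 1) :
    ‖mobiusAdd c (-x) y‖ ^ 2 =
      ‖x - y‖ ^ 2 / (1 - 2 * c * ⟪x, y⟫ + c ^ 2 * ‖x‖ ^ 2 * ‖y‖ ^ 2) :=
  norm_sq_mobiusAdd_neg_general c x y
end

section
/- (Theorem 1, gyrotranslation part.) For every c > 0 and all u, x, y ∈ E with c·‖u‖² < 1, c·‖x‖² < 1, c·‖y‖² < 1, the left gyrotranslation L_u(z) = u ⊕_c z is an isometry of the Poincaré ball with respect to the hyperbolic distance: d_c(u ⊕_c x, u ⊕_c y) = d_c(x, y). -/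
open scoped RealInnerProductSpace

variable {E : Type*} [NormedAddCommGroup E] [InnerProductSpace ℝ E] [FiniteDimensional ℝ E]

/-- Inverse hyperbolic tangent. -/
noncomputable def artanh (t : ℝ) : ℝ := (1 / 2) * Real.log ((1 + t) / (1 - t))

/-- Hyperbolic distance on the Poincaré ball of curvature `-c`. -/
noncomputable def hypDist (c : ℝ) (x y : E) : ℝ :=
  (2 / Real.sqrt c) * artanh (Real.sqrt c * ‖mobiusAdd c (-x) y‖)

/-!
The denominator `D c x y` of `x ⊕_c y` equals `c‖x + y‖² + (1 - c‖x‖²)(1 - c‖y‖²)`, so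
`‖x ⊕_c y‖² = ‖x + y‖² / D c x y` and `‖(-x) ⊕_c y‖` is a function of
`δ(x, y) = ‖x - y‖² / ((1 - c‖x‖²)(1 - c‖y‖²))` alone. As for Möbius maps of the disc, the
gyrotranslation `z ↦ u ⊕_c z` multiplies `‖x - y‖²` by `(1 - c‖u‖²)² / (D c u x · D c u y)` and
each factor `1 - c‖x‖²` by `(1 - c‖u‖²) / D c u x`, so it preserves `δ`, hence the distance.
-/

section

omit [FiniteDimensional ℝ E]

noncomputable def mobiusDenom (c : ℝ) (x y : E) : ℝ :=
  1 + 2 * c * ⟪x, y⟫ + c ^ 2 * ‖x‖ ^ 2 * ‖y‖ ^ 2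

/-- `cosh (√c · hypDist c x y) = 1 + 2c · poincareRatio c x y`. -/
noncomputable def poincareRatio (c : ℝ) (x y : E) : ℝ :=
  ‖x - y‖ ^ 2 / ((1 - c * ‖x‖ ^ 2) * (1 - c * ‖y‖ ^ 2))

theorem mobiusAdd_eq_inv_smul (c : ℝ) (x y : E) :
    mobiusAdd c x y = (mobiusDenom c x y)⁻¹ •
      ((1 + 2 * c * ⟪x, y⟫ + c * ‖y‖ ^ 2) • x + (1 - c * ‖x‖ ^ 2) • y) := by
  rw [mobiusAdd, one_div, mobiusDenom]

theorem mobiusDenom_eq (c : ℝ) (x y : E) :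
    mobiusDenom c x y = c * ‖x + y‖ ^ 2 + (1 - c * ‖x‖ ^ 2) * (1 - c * ‖y‖ ^ 2) := by
  rw [mobiusDenom, norm_add_sq_real]
  ring

theorem mobiusDenom_pos {c : ℝ} (hc : 0 ≤ c) {x y : E} (hx : c * ‖x‖ ^ 2 < 1)
    (hy : c * ‖y‖ ^ 2 < 1) : 0 < mobiusDenom c x y := by
  rw [mobiusDenom_eq]
  exact add_pos_of_nonneg_of_pos (by positivity) (mul_pos (sub_pos.2 hx) (sub_pos.2 hy))

theorem norm_mobiusAdd_sq (c : ℝ) (x y : E) :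
    ‖mobiusAdd c x y‖ ^ 2 = ‖x + y‖ ^ 2 / mobiusDenom c x y := by
  have hnum : ‖(1 + 2 * c * ⟪x, y⟫ + c * ‖y‖ ^ 2) • x + (1 - c * ‖x‖ ^ 2) • y‖ ^ 2
      = mobiusDenom c x y * ‖x + y‖ ^ 2 := by
    rw [norm_add_sq_real, norm_add_sq_real, norm_smul, norm_smul, real_inner_smul_left,
      real_inner_smul_right, Real.norm_eq_abs, Real.norm_eq_abs, mul_pow, mul_pow, sq_abs,
      sq_abs, mobiusDenom]
    ring
  rw [mobiusAdd_eq_inv_smul, norm_smul, mul_pow, hnum, Real.norm_eq_abs, sq_abs]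
  rcases eq_or_ne (mobiusDenom c x y) 0 with hD | hD
  · simp [hD]
  · field_simp

theorem one_sub_mul_norm_mobiusAdd_sq {c : ℝ} {x y : E} (hD : mobiusDenom c x y ≠ 0) :
    1 - c * ‖mobiusAdd c x y‖ ^ 2 =
      (1 - c * ‖x‖ ^ 2) * (1 - c * ‖y‖ ^ 2) / mobiusDenom c x y := by
  rw [norm_mobiusAdd_sq, eq_div_iff hD]
  field_simp
  rw [mobiusDenom_eq]
  ring

theorem mul_norm_mobiusAdd_sq_lt_one {c : ℝ} (hc : 0 ≤ c) {x y : E} (hx : c * ‖x‖ ^ 2 < 1)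
    (hy : c * ‖y‖ ^ 2 < 1) : c * ‖mobiusAdd c x y‖ ^ 2 < 1 := by
  have hD := mobiusDenom_pos hc hx hy
  have h := one_sub_mul_norm_mobiusAdd_sq hD.ne'
  have : 0 < (1 - c * ‖x‖ ^ 2) * (1 - c * ‖y‖ ^ 2) / mobiusDenom c x y :=
    div_pos (mul_pos (sub_pos.2 hx) (sub_pos.2 hy)) hD
  linarith

theorem norm_mobiusAdd_sub_mobiusAdd_sq {c : ℝ} {u x y : E} (hx : mobiusDenom c u x ≠ 0)
    (hy : mobiusDenom c u y ≠ 0) :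
    ‖mobiusAdd c u x - mobiusAdd c u y‖ ^ 2 =
      (1 - c * ‖u‖ ^ 2) ^ 2 * ‖x - y‖ ^ 2 / (mobiusDenom c u x * mobiusDenom c u y) := by
  rw [norm_sub_sq_real, norm_mobiusAdd_sq, norm_mobiusAdd_sq, norm_sub_sq_real,
    norm_add_sq_real, norm_add_sq_real]
  simp only [mobiusAdd_eq_inv_smul, real_inner_smul_left, real_inner_smul_right, inner_add_left,
    inner_add_right, real_inner_self_eq_norm_sq, real_inner_comm u x]
  field_simp
  unfold mobiusDenom
  ring

theorem norm_neg_mobiusAdd_sq {c : ℝ} {x y : E} (hx : c * ‖x‖ ^ 2 ≠ 1)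
    (hy : c * ‖y‖ ^ 2 ≠ 1) :
    ‖mobiusAdd c (-x) y‖ ^ 2 = poincareRatio c x y / (c * poincareRatio c x y + 1) := by
  have hx' : 1 - c * ‖x‖ ^ 2 ≠ 0 := sub_ne_zero.2 hx.symm
  have hy' : 1 - c * ‖y‖ ^ 2 ≠ 0 := sub_ne_zero.2 hy.symm
  rw [norm_mobiusAdd_sq, mobiusDenom_eq, norm_neg, neg_add_eq_sub, norm_sub_rev, poincareRatio]
  field_simp

theorem poincareRatio_mobiusAdd {c : ℝ} (hc : 0 ≤ c) {u x y : E} (hu : c * ‖u‖ ^ 2 < 1)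
    (hx : c * ‖x‖ ^ 2 < 1) (hy : c * ‖y‖ ^ 2 < 1) :
    poincareRatio c (mobiusAdd c u x) (mobiusAdd c u y) = poincareRatio c x y := by
  have hDx := (mobiusDenom_pos hc hu hx).ne'
  have hDy := (mobiusDenom_pos hc hu hy).ne'
  have hu' : 1 - c * ‖u‖ ^ 2 ≠ 0 := (sub_pos.2 hu).ne'
  rw [poincareRatio, norm_mobiusAdd_sub_mobiusAdd_sq hDx hDy, one_sub_mul_norm_mobiusAdd_sq hDx,
    one_sub_mul_norm_mobiusAdd_sq hDy, poincareRatio]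
  field_simp

end

theorem gyrotranslation_isometry (c : ℝ) (hc : 0 < c) (u x y : E)
    (hu : c * ‖u‖ ^ 2 < 1) (hx : c * ‖x‖ ^ 2 < 1) (hy : c * ‖y‖ ^ 2 < 1) :
    hypDist c (mobiusAdd c u x) (mobiusAdd c u y) = hypDist c x y := by
  have hnorm : ‖mobiusAdd c (-mobiusAdd c u x) (mobiusAdd c u y)‖ = ‖mobiusAdd c (-x) y‖ := by
    rw [← sq_eq_sq₀ (norm_nonneg _) (norm_nonneg _),
      norm_neg_mobiusAdd_sq (mul_norm_mobiusAdd_sq_lt_one hc.le hu hx).ne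
        (mul_norm_mobiusAdd_sq_lt_one hc.le hu hy).ne,
      norm_neg_mobiusAdd_sq hx.ne hy.ne, poincareRatio_mobiusAdd hc.le hu hx hy]
  rw [hypDist, hypDist, hnorm]
end

section
/- (Theorem 1, converse direction.) Let c > 0 and let R : E → E be a map which sends the Poincaré ball B_c into B_c, is surjective onto B_c, and preserves the hyperbolic distance: d_c(R x, R y) = d_c(x, y) for all x, y ∈ B_c. Then there exist b ∈ E with c·‖b‖² < 1 and a linear isometry W : E → E such that R x = b ⊕_c (W x) for all x ∈ B_c; i.e. every isometry of (B_c, d_c) is the composite of a left gyrotranslation and an orthogonal transformation. -/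
open scoped RealInnerProductSpace

variable {E : Type*} [NormedAddCommGroup E] [InnerProductSpace ℝ E] [FiniteDimensional ℝ E]

/-!
Composing `R` with the gyrotranslation `x ↦ (-R 0) ⊕ x` gives a map `S` with `S 0 = 0`.
Gyrotranslations preserve `δ(x, y) = ‖x - y‖² / ((1 - c‖x‖²)(1 - c‖y‖²))`; in particular
`δ(x, y) = δ(0, (-x) ⊕ y)` is, like `d_c(x, y)`, a strictly increasing function of `‖(-x) ⊕ y‖`,
so `S` preserves `δ`. Comparing with `δ(0, ·)` gives `‖S x‖ = ‖x‖` and then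
`‖S x - S y‖ = ‖x - y‖`, so `S` preserves inner products on the ball. Such a map respects every
linear relation among points of the ball, hence is the restriction of a linear isometry `W`, and
`R x = R 0 ⊕ W x` by left cancellation.
-/

open Filter Topology

section InnerPreserving

variable {V : Type*} [NormedAddCommGroup V] [InnerProductSpace ℝ V]

theorem map_eq_smul_add_smul_of_inner_map_map {U : Set V} {S : V → V}
    (hS : ∀ x ∈ U, ∀ y ∈ U, ⟪S x, S y⟫ = ⟪x, y⟫) {u v w : V} (hu : u ∈ U) (hv : v ∈ U)
    (hw : w ∈ U) {a b : ℝ} (h : w = a • u + b • v) : S w = a • S u + b • S v := by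
  rw [← sub_eq_zero, ← inner_self_eq_zero (𝕜 := ℝ)]
  have h0 : ⟪w - (a • u + b • v), w - (a • u + b • v)⟫ = 0 := by simp [h]
  rw [← h0]
  simp only [inner_sub_left, inner_sub_right, inner_add_left, inner_add_right,
    real_inner_smul_left, real_inner_smul_right, hS _ hu _ hv, hS _ hv _ hu, hS _ hu _ hu,
    hS _ hv _ hv, hS _ hw _ hu, hS _ hu _ hw, hS _ hw _ hv, hS _ hv _ hw, hS _ hw _ hw]

theorem exists_linearIsometry_eqOn_of_inner_map_map {U : Set V} (hU : U ∈ 𝓝 (0 : V))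
    {S : V → V} (hS : ∀ x ∈ U, ∀ y ∈ U, ⟪S x, S y⟫ = ⟪x, y⟫) :
    ∃ W : V →ₗᵢ[ℝ] V, ∀ x ∈ U, S x = W x := by
  have hsmall (z : V) : ∀ᶠ σ in 𝓝[>] (0 : ℝ), 0 < σ ∧ σ • z ∈ U := by
    exact eventually_mem_nhdsWithin.and (nhdsWithin_le_nhds
      ((continuous_id.smul continuous_const).tendsto' (0 : ℝ) (0 : V) (zero_smul ℝ z) hU))
  choose σ hσ using fun z => (hsmall z).exists
  have hscale (z : V) {τ : ℝ} (hτ : 0 < τ) (hτz : τ • z ∈ U) :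
      (σ z)⁻¹ • S (σ z • z) = τ⁻¹ • S (τ • z) := by
    have := map_eq_smul_add_smul_of_inner_map_map hS hτz hτz (hσ z).2 (a := σ z / τ) (b := 0)
      (by rw [zero_smul, add_zero, smul_smul, div_mul_cancel₀ _ hτ.ne'])
    rw [this, zero_smul, add_zero, smul_smul]
    congr 1
    field_simp [(hσ z).1.ne']
  let W : V →ₗ[ℝ] V :=
    { toFun := fun z => (σ z)⁻¹ • S (σ z • z)
      map_add' := fun x y => by
        obtain ⟨τ, ⟨hτ, hx⟩, ⟨-, hy⟩, ⟨-, hxy⟩⟩ :=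
          ((hsmall x).and ((hsmall y).and (hsmall (x + y)))).exists
        rw [hscale _ hτ hx, hscale _ hτ hy, hscale _ hτ hxy,
          map_eq_smul_add_smul_of_inner_map_map hS hx hy hxy (a := 1) (b := 1)
            (by rw [one_smul, one_smul, smul_add]), one_smul, one_smul, smul_add]
      map_smul' := fun a x => by
        obtain ⟨τ, ⟨hτ, hx⟩, ⟨-, hax⟩⟩ := ((hsmall x).and (hsmall (a • x))).exists
        simp only [hscale _ hτ hx, hscale _ hτ hax, RingHom.id_apply,
          map_eq_smul_add_smul_of_inner_map_map hS hx hx hax (a := a) (b := 0)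
            (by rw [zero_smul, add_zero, smul_comm]), zero_smul, add_zero, smul_comm a] }
  refine ⟨W.isometryOfInner fun x y => ?_, fun x hx => ?_⟩
  · obtain ⟨τ, ⟨hτ, hx⟩, ⟨-, hy⟩⟩ := ((hsmall x).and (hsmall y)).exists
    simp only [LinearMap.coe_mk, AddHom.coe_mk, W, hscale _ hτ hx, hscale _ hτ hy,
      real_inner_smul_left, real_inner_smul_right, hS _ hx _ hy]
    field_simp
  · simp [W, hscale x one_pos (by rwa [one_smul])]

end InnerPreserving

section PoincareBall

variable {V : Type*} [NormedAddCommGroup V] {c : ℝ}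

def poincareBall (c : ℝ) : Set V := {x | c * ‖x‖ ^ 2 < 1}

theorem mem_poincareBall {x : V} : x ∈ poincareBall c ↔ c * ‖x‖ ^ 2 < 1 := Iff.rfl

theorem poincareBall_mem_nhds_zero (c : ℝ) : poincareBall c ∈ 𝓝 (0 : V) :=
  (isOpen_lt (by fun_prop) continuous_const).mem_nhds (by simp)

theorem sqrt_mul_norm_mem_Ioo (hc : 0 < c) {x : V} (hx : x ∈ poincareBall c) :
    √c * ‖x‖ ∈ Set.Ioo (-1) 1 := by
  have hsq : (√c * ‖x‖) ^ 2 < 1 := by rwa [mul_pow, Real.sq_sqrt hc.le]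
  exact ⟨by linarith [mul_nonneg (Real.sqrt_nonneg c) (norm_nonneg x)],
    (abs_lt_of_sq_lt_sq' (by rwa [one_pow]) zero_le_one).2⟩

theorem neg_mem_poincareBall {x : V} : -x ∈ poincareBall c ↔ x ∈ poincareBall c := by
  simp [mem_poincareBall]

-- `cosh (√c * hypDist c x y) = 1 + 2 * c * poincareDelta c x y`
noncomputable def poincareDelta (c : ℝ) (x y : V) : ℝ :=
  ‖x - y‖ ^ 2 / ((1 - c * ‖x‖ ^ 2) * (1 - c * ‖y‖ ^ 2))

theorem poincareDelta_zero_left (z : V) :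
    poincareDelta c 0 z = ‖z‖ ^ 2 / (1 - c * ‖z‖ ^ 2) := by
  simp [poincareDelta]

end PoincareBall

section Mobius

variable {V : Type*} [NormedAddCommGroup V] [InnerProductSpace ℝ V] {c : ℝ}

noncomputable def mobiusDen (c : ℝ) (x y : V) : ℝ :=
  1 + 2 * c * ⟪x, y⟫ + c ^ 2 * ‖x‖ ^ 2 * ‖y‖ ^ 2

theorem mobiusAdd_eq (x y : V) : mobiusAdd c x y =
    (mobiusDen c x y)⁻¹ • ((1 + 2 * c * ⟪x, y⟫ + c * ‖y‖ ^ 2) • x + (1 - c * ‖x‖ ^ 2) • y) := by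
  rw [mobiusAdd, mobiusDen, one_div]

theorem mobiusDen_pos (hc : 0 < c) {x y : V} (hx : x ∈ poincareBall c)
    (hy : y ∈ poincareBall c) : 0 < mobiusDen c x y := by
  have hxy : c * (‖x‖ * ‖y‖) < 1 := by
    have : (c * (‖x‖ * ‖y‖)) ^ 2 < 1 := by
      rw [show (c * (‖x‖ * ‖y‖)) ^ 2 = (c * ‖x‖ ^ 2) * (c * ‖y‖ ^ 2) by ring]
      exact mul_lt_one_of_nonneg_of_lt_one_left (by positivity) hx hy.le
    exact (abs_lt_of_sq_lt_sq' (by rwa [one_pow]) zero_le_one).2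
  have hinner := neg_le_of_abs_le (abs_real_inner_le_norm x y)
  unfold mobiusDen
  nlinarith [sq_nonneg (1 - c * (‖x‖ * ‖y‖))]

theorem norm_smul_add_smul_sq (α β : ℝ) (x y : V) :
    ‖α • x + β • y‖ ^ 2 = α ^ 2 * ‖x‖ ^ 2 + 2 * (α * β) * ⟪x, y⟫ + β ^ 2 * ‖y‖ ^ 2 := by
  rw [norm_add_sq_real, norm_smul, norm_smul, real_inner_smul_left, real_inner_smul_right,
    mul_pow, mul_pow, Real.norm_eq_abs, Real.norm_eq_abs, sq_abs, sq_abs]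
  ring

theorem one_sub_mul_norm_mobiusAdd_sq_mul_mobiusDen {x y : V} (hD : mobiusDen c x y ≠ 0) :
    (1 - c * ‖mobiusAdd c x y‖ ^ 2) * mobiusDen c x y = (1 - c * ‖x‖ ^ 2) * (1 - c * ‖y‖ ^ 2) := by
  rw [mobiusAdd_eq, norm_smul, mul_pow, norm_smul_add_smul_sq, norm_inv, Real.norm_eq_abs,
    inv_pow, sq_abs]
  field_simp
  unfold mobiusDen
  ring

theorem mobiusAdd_mem_poincareBall (hc : 0 < c) {x y : V} (hx : x ∈ poincareBall c)
    (hy : y ∈ poincareBall c) : mobiusAdd c x y ∈ poincareBall c := by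
  have hD := mobiusDen_pos hc hx hy
  have h := one_sub_mul_norm_mobiusAdd_sq_mul_mobiusDen hD.ne'
  rw [mem_poincareBall] at *
  nlinarith [mul_pos (sub_pos.2 hx) (sub_pos.2 hy)]

theorem norm_mobiusAdd_sub_mobiusAdd_sq_mul_mobiusDen {a x y : V} (hx : mobiusDen c a x ≠ 0)
    (hy : mobiusDen c a y ≠ 0) :
    ‖mobiusAdd c a x - mobiusAdd c a y‖ ^ 2 * (mobiusDen c a x * mobiusDen c a y) =
      (1 - c * ‖a‖ ^ 2) ^ 2 * ‖x - y‖ ^ 2 := by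
  have hcomb : (mobiusDen c a x * mobiusDen c a y) • (mobiusAdd c a x - mobiusAdd c a y) =
      ((1 + 2 * c * ⟪a, x⟫ + c * ‖x‖ ^ 2) * mobiusDen c a y -
          (1 + 2 * c * ⟪a, y⟫ + c * ‖y‖ ^ 2) * mobiusDen c a x) • a +
        (1 - c * ‖a‖ ^ 2) • (mobiusDen c a y • x + (-mobiusDen c a x) • y) := by
    rw [mobiusAdd_eq, mobiusAdd_eq]
    match_scalars <;> field_simp
  have hnorm : ‖(mobiusDen c a x * mobiusDen c a y) • (mobiusAdd c a x - mobiusAdd c a y)‖ ^ 2 =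
      (mobiusDen c a x * mobiusDen c a y) * ((1 - c * ‖a‖ ^ 2) ^ 2 * ‖x - y‖ ^ 2) := by
    rw [hcomb, norm_smul_add_smul_sq, norm_smul_add_smul_sq, norm_sub_sq_real, inner_add_right,
      real_inner_smul_right, real_inner_smul_right]
    unfold mobiusDen
    ring
  rw [norm_smul, mul_pow, Real.norm_eq_abs, sq_abs, sq] at hnorm
  rw [← mul_right_inj' (mul_ne_zero hx hy), ← hnorm]
  ring

theorem neg_mobiusAdd_cancel (a : V) : mobiusAdd c (-a) a = 0 := by
  rw [mobiusAdd]
  simp only [inner_neg_left, real_inner_self_eq_norm_sq, norm_neg]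
  match_scalars
  ring

theorem neg_mobiusAdd_cancel_left (hc : 0 < c) {a z : V} (ha : a ∈ poincareBall c)
    (hz : z ∈ poincareBall c) : mobiusAdd c (-a) (mobiusAdd c a z) = z := by
  have hD := mobiusDen_pos hc ha hz
  have hA : 1 - c * ‖a‖ ^ 2 ≠ 0 := (sub_pos.2 ha).ne'
  have hv := mobiusAdd_eq (c := c) a z
  set v := mobiusAdd c a z
  have hav : ⟪a, v⟫ = ((1 + 2 * c * ⟪a, z⟫ + c * ‖z‖ ^ 2) * ‖a‖ ^ 2 +
      (1 - c * ‖a‖ ^ 2) * ⟪a, z⟫) / mobiusDen c a z := by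
    rw [hv, real_inner_smul_right, inner_add_right, real_inner_smul_right,
      real_inner_smul_right, real_inner_self_eq_norm_sq, inv_mul_eq_div]
  have hvv : ‖v‖ ^ 2 = ((1 + 2 * c * ⟪a, z⟫ + c * ‖z‖ ^ 2) ^ 2 * ‖a‖ ^ 2 +
      2 * ((1 + 2 * c * ⟪a, z⟫ + c * ‖z‖ ^ 2) * (1 - c * ‖a‖ ^ 2)) * ⟪a, z⟫ +
      (1 - c * ‖a‖ ^ 2) ^ 2 * ‖z‖ ^ 2) / mobiusDen c a z ^ 2 := by
    rw [hv, norm_smul, mul_pow, norm_smul_add_smul_sq, norm_inv, Real.norm_eq_abs, inv_pow,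
      sq_abs, inv_mul_eq_div]
  have hden : mobiusDen c (-a) v = (1 - c * ‖a‖ ^ 2) ^ 2 / mobiusDen c a z := by
    rw [mobiusDen, inner_neg_left, norm_neg, hav, hvv]
    field_simp
    unfold mobiusDen
    ring
  rw [mobiusAdd_eq, hden, inner_neg_left, norm_neg, hav, hvv, hv]
  match_scalars
  · field_simp
    unfold mobiusDen
    ring
  · field_simp

theorem poincareDelta_mobiusAdd (hc : 0 < c) {a x y : V} (ha : a ∈ poincareBall c)
    (hx : x ∈ poincareBall c) (hy : y ∈ poincareBall c) :
    poincareDelta c (mobiusAdd c a x) (mobiusAdd c a y) = poincareDelta c x y := by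
  have hDx := mobiusDen_pos hc ha hx
  have hDy := mobiusDen_pos hc ha hy
  have hdist := norm_mobiusAdd_sub_mobiusAdd_sq_mul_mobiusDen hDx.ne' hDy.ne'
  have hnx := one_sub_mul_norm_mobiusAdd_sq_mul_mobiusDen hDx.ne'
  have hny := one_sub_mul_norm_mobiusAdd_sq_mul_mobiusDen hDy.ne'
  have hpos {z : V} (hz : z ∈ poincareBall c) : 0 < 1 - c * ‖z‖ ^ 2 := sub_pos.2 hz
  unfold poincareDelta
  rw [div_eq_div_iff (mul_pos (hpos (mobiusAdd_mem_poincareBall hc ha hx))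
    (hpos (mobiusAdd_mem_poincareBall hc ha hy))).ne' (mul_pos (hpos hx) (hpos hy)).ne']
  refine mul_right_cancel₀ (mul_ne_zero hDx.ne' hDy.ne') ?_
  linear_combination ((1 - c * ‖x‖ ^ 2) * (1 - c * ‖y‖ ^ 2)) * hdist
    - ‖x - y‖ ^ 2 * ((1 - c * ‖mobiusAdd c a y‖ ^ 2) * mobiusDen c a y) * hnx
    - ‖x - y‖ ^ 2 * ((1 - c * ‖a‖ ^ 2) * (1 - c * ‖x‖ ^ 2)) * hny

theorem poincareDelta_eq_norm_mobiusAdd (hc : 0 < c) {x y : V} (hx : x ∈ poincareBall c)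
    (hy : y ∈ poincareBall c) :
    poincareDelta c x y = ‖mobiusAdd c (-x) y‖ ^ 2 / (1 - c * ‖mobiusAdd c (-x) y‖ ^ 2) := by
  rw [← poincareDelta_mobiusAdd hc (neg_mem_poincareBall.2 hx) hx hy, neg_mobiusAdd_cancel,
    poincareDelta_zero_left]

theorem artanh_eq_real_artanh {t : ℝ} (ht : t ∈ Set.Icc (-1) 1) : artanh t = Real.artanh t :=
  (Real.artanh_eq_half_log ht).symm

theorem norm_mobiusAdd_eq_of_hypDist_eq (hc : 0 < c) {x y x' y' : V}
    (hx : x ∈ poincareBall c) (hy : y ∈ poincareBall c) (hx' : x' ∈ poincareBall c)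
    (hy' : y' ∈ poincareBall c) (h : hypDist c x' y' = hypDist c x y) :
    ‖mobiusAdd c (-x') y'‖ = ‖mobiusAdd c (-x) y‖ := by
  have hmem {p q : V} (hp : p ∈ poincareBall c) (hq : q ∈ poincareBall c) :
      √c * ‖mobiusAdd c (-p) q‖ ∈ Set.Ioo (-1) 1 :=
    sqrt_mul_norm_mem_Ioo hc (mobiusAdd_mem_poincareBall hc (neg_mem_poincareBall.2 hp) hq)
  unfold hypDist at h
  rw [artanh_eq_real_artanh (Set.Ioo_subset_Icc_self (hmem hx' hy')),
    artanh_eq_real_artanh (Set.Ioo_subset_Icc_self (hmem hx hy))] at h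
  have := Real.artanh_injOn (hmem hx' hy') (hmem hx hy)
    (mul_left_cancel₀ (by positivity) h)
  exact mul_left_cancel₀ (Real.sqrt_pos.2 hc).ne' this

theorem poincareDelta_eq_of_hypDist_eq (hc : 0 < c) {x y x' y' : V}
    (hx : x ∈ poincareBall c) (hy : y ∈ poincareBall c) (hx' : x' ∈ poincareBall c)
    (hy' : y' ∈ poincareBall c) (h : hypDist c x' y' = hypDist c x y) :
    poincareDelta c x' y' = poincareDelta c x y := by
  rw [poincareDelta_eq_norm_mobiusAdd hc hx' hy', poincareDelta_eq_norm_mobiusAdd hc hx hy,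
    norm_mobiusAdd_eq_of_hypDist_eq hc hx hy hx' hy' h]

theorem inner_map_map_of_poincareDelta {S : V → V} (hS0 : S 0 = 0)
    (hmaps : ∀ x ∈ poincareBall c, S x ∈ poincareBall c)
    (hS : ∀ x ∈ poincareBall c, ∀ y ∈ poincareBall c,
      poincareDelta c (S x) (S y) = poincareDelta c x y) :
    ∀ x ∈ poincareBall c, ∀ y ∈ poincareBall c, ⟪S x, S y⟫ = ⟪x, y⟫ := by
  have hpos {z : V} (hz : z ∈ poincareBall c) : 0 < 1 - c * ‖z‖ ^ 2 := sub_pos.2 hz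
  have hnorm : ∀ x ∈ poincareBall c, ‖S x‖ ^ 2 = ‖x‖ ^ 2 := by
    intro x hx
    have h := hS 0 (by simp [mem_poincareBall]) x hx
    rw [hS0, poincareDelta_zero_left, poincareDelta_zero_left,
      div_eq_div_iff (hpos (hmaps x hx)).ne' (hpos hx).ne'] at h
    linear_combination h
  intro x hx y hy
  have h := hS x hx y hy
  unfold poincareDelta at h
  rw [hnorm x hx, hnorm y hy, div_left_inj' (mul_pos (hpos hx) (hpos hy)).ne',
    norm_sub_sq_real, norm_sub_sq_real, hnorm x hx, hnorm y hy] at h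
  linarith

end Mobius

theorem isometry_decomposition_general (c : ℝ) (hc : 0 < c) (R : E → E)
    (hmaps : ∀ x : E, c * ‖x‖ ^ 2 < 1 → c * ‖R x‖ ^ 2 < 1)
    (hiso : ∀ x y : E, c * ‖x‖ ^ 2 < 1 → c * ‖y‖ ^ 2 < 1 →
      hypDist c (R x) (R y) = hypDist c x y) :
    ∃ b : E, c * ‖b‖ ^ 2 < 1 ∧ ∃ W : E →ₗᵢ[ℝ] E,
      ∀ x : E, c * ‖x‖ ^ 2 < 1 → R x = mobiusAdd c b (W x) := by
  have hb : R 0 ∈ poincareBall c := hmaps 0 (by simp)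
  have hnb : -R 0 ∈ poincareBall c := neg_mem_poincareBall.2 hb
  let S : E → E := fun x => mobiusAdd c (-R 0) (R x)
  have hSmaps : ∀ x ∈ poincareBall c, S x ∈ poincareBall c := fun x hx =>
    mobiusAdd_mem_poincareBall hc hnb (hmaps x hx)
  have hS : ∀ x ∈ poincareBall c, ∀ y ∈ poincareBall c,
      poincareDelta c (S x) (S y) = poincareDelta c x y := fun x hx y hy =>
    (poincareDelta_mobiusAdd hc hnb (hmaps x hx) (hmaps y hy)).trans
      (poincareDelta_eq_of_hypDist_eq hc hx hy (hmaps x hx) (hmaps y hy) (hiso x y hx hy))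
  obtain ⟨W, hW⟩ := exists_linearIsometry_eqOn_of_inner_map_map (poincareBall_mem_nhds_zero c)
    (inner_map_map_of_poincareDelta (neg_mobiusAdd_cancel (R 0)) hSmaps hS)
  refine ⟨R 0, hb, W, fun x hx => ?_⟩
  rw [← hW x hx]
  simpa only [neg_neg] using (neg_mobiusAdd_cancel_left hc hnb (hmaps x hx)).symm

theorem isometry_decomposition (c : ℝ) (hc : 0 < c) (R : E → E)
    (hmaps : ∀ x : E, c * ‖x‖ ^ 2 < 1 → c * ‖R x‖ ^ 2 < 1)
    (hsurj : ∀ y : E, c * ‖y‖ ^ 2 < 1 → ∃ x : E, c * ‖x‖ ^ 2 < 1 ∧ R x = y)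
    (hiso : ∀ x y : E, c * ‖x‖ ^ 2 < 1 → c * ‖y‖ ^ 2 < 1 →
      hypDist c (R x) (R y) = hypDist c x y) :
    ∃ b : E, c * ‖b‖ ^ 2 < 1 ∧ ∃ W : E →ₗᵢ[ℝ] E,
      ∀ x : E, c * ‖x‖ ^ 2 < 1 → R x = mobiusAdd c b (W x) :=
  isometry_decomposition_general c hc R hmaps hiso
end

section
/- (Geodesic endpoints.) Let c > 0 and x, y ∈ E with c·‖x‖² < 1 and c·‖y‖² < 1. Define Möbius scalar multiplication t ⊗_c v = (1/√c)·tanh(t·artanh(√c·‖v‖))·v/‖v‖ for v ≠ 0 and t ⊗_c 0 = 0, and the curve γ(t) = x ⊕_c ((−x ⊕_c y) ⊗_c t). Then γ(0) = x and γ(1) = y. -/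
open scoped Classical

open scoped RealInnerProductSpace

variable {E : Type*} [NormedAddCommGroup E] [InnerProductSpace ℝ E] [FiniteDimensional ℝ E]

/-- Möbius scalar multiplication `t ⊗_c v`. -/
noncomputable def mobiusSmul (c t : ℝ) (v : E) : E :=
  if v = 0 then 0
  else ((1 / Real.sqrt c) * Real.tanh (t * artanh (Real.sqrt c * ‖v‖)) / ‖v‖) • v

/-!
Since `0 ⊗_c v = 0`, `1 ⊗_c v = v` on the ball (because `tanh ∘ artanh = id` on `(-1, 1)`) and
`x ⊕_c 0 = x`, everything reduces to the left cancellation law `x ⊕_c ((-x) ⊕_c y) = y`.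
Stability of the ball under `⊕_c` comes from the identity
`1 - c‖x ⊕_c y‖² = (1 - c‖x‖²)(1 - c‖y‖²) / D(x, y)`, with `D` the denominator of `⊕_c`.
Cancellation is a computation in `span {x, y}`: for `v = (-x) ⊕_c y = -(A/D) x + (B/D) y`,
that identity and the value of `⟪x, v⟫` give `1 + 2c⟪x, v⟫ + c‖v‖² = AB/D` and `D(x, v) = B²/D`,
so in `x ⊕_c v` the coefficient of `x` vanishes and that of `y` is `1`.
-/

theorem tanh_artanh {t : ℝ} (ht : t ∈ Set.Ioo (-1) 1) : Real.tanh (artanh t) = t := by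
  rw [artanh, ← Real.artanh_eq_half_log (Set.Ioo_subset_Icc_self ht), Real.tanh_artanh ht]

section Mobius

variable {F : Type*} [NormedAddCommGroup F] [InnerProductSpace ℝ F] {c : ℝ} {x y : F}

theorem mobiusAdd_zero_right (c : ℝ) (x : F) : mobiusAdd c x 0 = x := by
  simp [mobiusAdd]

theorem mobiusSmul_zero_left (c : ℝ) (v : F) : mobiusSmul c 0 v = 0 := by
  simp [mobiusSmul]

theorem mobiusSmul_one_left (hc : 0 < c) {v : F} (hv : c * ‖v‖ ^ 2 < 1) :
    mobiusSmul c 1 v = v := by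
  rw [mobiusSmul]
  split_ifs with hv0
  · exact hv0.symm
  have hsqrt : 0 < Real.sqrt c := Real.sqrt_pos.mpr hc
  have hnorm : 0 < ‖v‖ := norm_pos_iff.mpr hv0
  have hlt : Real.sqrt c * ‖v‖ < 1 := by
    have : (Real.sqrt c * ‖v‖) ^ 2 < 1 := by rwa [mul_pow, Real.sq_sqrt hc.le]
    nlinarith [mul_pos hsqrt hnorm]
  rw [one_mul, tanh_artanh ⟨by nlinarith [mul_pos hsqrt hnorm], hlt⟩]
  rw [show 1 / Real.sqrt c * (Real.sqrt c * ‖v‖) / ‖v‖ = 1 by field_simp, one_smul]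

theorem mobiusAdd_denom_pos (hc : 0 ≤ c) (hx : c * ‖x‖ ^ 2 < 1) (hy : c * ‖y‖ ^ 2 < 1) :
    0 < 1 + 2 * c * ⟪x, y⟫ + c ^ 2 * ‖x‖ ^ 2 * ‖y‖ ^ 2 := by
  have hprod : c * (‖x‖ * ‖y‖) < 1 := by
    have : (c * (‖x‖ * ‖y‖)) ^ 2 < 1 := by
      rw [show (c * (‖x‖ * ‖y‖)) ^ 2 = (c * ‖x‖ ^ 2) * (c * ‖y‖ ^ 2) by ring]
      nlinarith [mul_nonneg hc (sq_nonneg ‖x‖), mul_nonneg hc (sq_nonneg ‖y‖)]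
    nlinarith [mul_nonneg hc (mul_nonneg (norm_nonneg x) (norm_nonneg y))]
  -- Cauchy–Schwarz bounds the denominator below by `(1 - c‖x‖‖y‖)²`.
  have hcs := (abs_le.mp (abs_real_inner_le_norm x y)).1
  nlinarith [sq_nonneg (1 - c * (‖x‖ * ‖y‖)), mul_le_mul_of_nonneg_left hcs hc]

theorem one_sub_mul_norm_sq_mobiusAdd (hD : 1 + 2 * c * ⟪x, y⟫ + c ^ 2 * ‖x‖ ^ 2 * ‖y‖ ^ 2 ≠ 0) :
    1 - c * ‖mobiusAdd c x y‖ ^ 2 = (1 - c * ‖x‖ ^ 2) * (1 - c * ‖y‖ ^ 2) /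
      (1 + 2 * c * ⟪x, y⟫ + c ^ 2 * ‖x‖ ^ 2 * ‖y‖ ^ 2) := by
  rw [mobiusAdd, norm_smul, mul_pow, Real.norm_eq_abs, sq_abs,
    ← real_inner_self_eq_norm_sq (_ + _)]
  simp only [inner_add_left, inner_add_right, real_inner_smul_left, real_inner_smul_right,
    real_inner_self_eq_norm_sq, real_inner_comm x y, norm_smul, mul_pow, Real.norm_eq_abs, sq_abs]
  generalize hDdef : 1 + 2 * c * ⟪x, y⟫ + c ^ 2 * ‖x‖ ^ 2 * ‖y‖ ^ 2 = D at hD ⊢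
  field_simp
  rw [← hDdef]
  ring

theorem mul_norm_sq_mobiusAdd_lt (hc : 0 ≤ c) (hx : c * ‖x‖ ^ 2 < 1) (hy : c * ‖y‖ ^ 2 < 1) :
    c * ‖mobiusAdd c x y‖ ^ 2 < 1 := by
  have hD := mobiusAdd_denom_pos hc hx hy
  have := one_sub_mul_norm_sq_mobiusAdd hD.ne'
  have : 0 < (1 - c * ‖x‖ ^ 2) * (1 - c * ‖y‖ ^ 2) / _ := div_pos (by nlinarith) hD
  linarith

theorem mobiusAdd_left_cancel (hx : c * ‖x‖ ^ 2 ≠ 1)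
    (hD : 1 + 2 * c * ⟪-x, y⟫ + c ^ 2 * ‖-x‖ ^ 2 * ‖y‖ ^ 2 ≠ 0) :
    mobiusAdd c x (mobiusAdd c (-x) y) = y := by
  have hnorm := one_sub_mul_norm_sq_mobiusAdd hD
  set v := mobiusAdd c (-x) y
  rw [inner_neg_left, norm_neg] at hD hnorm
  set A := 1 - 2 * c * ⟪x, y⟫ + c * ‖y‖ ^ 2
  set B := 1 - c * ‖x‖ ^ 2
  set D := 1 + 2 * c * -⟪x, y⟫ + c ^ 2 * ‖x‖ ^ 2 * ‖y‖ ^ 2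
  have hB : B ≠ 0 := sub_ne_zero.mpr (Ne.symm hx)
  have hv : v = (-(A / D)) • x + (B / D) • y := by
    simp only [v, mobiusAdd, inner_neg_left, norm_neg]
    module
  have hinner : D * ⟪x, v⟫ = B * ⟪x, y⟫ - A * ‖x‖ ^ 2 := by
    rw [hv, inner_add_right, real_inner_smul_right, real_inner_smul_right,
      real_inner_self_eq_norm_sq]
    field_simp
    ring
  have hnorm' : D * (1 - c * ‖v‖ ^ 2) = B * (1 - c * ‖y‖ ^ 2) := by
    rw [hnorm]; field_simp
  have hnum : (1 + 2 * c * ⟪x, v⟫ + c * ‖v‖ ^ 2) * D = A * B := by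
    linear_combination 2 * c * hinner - hnorm'
  have hden : (1 + 2 * c * ⟪x, v⟫ + c ^ 2 * ‖x‖ ^ 2 * ‖v‖ ^ 2) * D = B ^ 2 := by
    linear_combination 2 * c * hinner - c * ‖x‖ ^ 2 * hnorm'
  rw [mobiusAdd, eq_div_of_mul_eq hD hnum, eq_div_of_mul_eq hD hden, hv]
  match_scalars <;> field_simp <;> ring

end Mobius

theorem geodesic_endpoints (c : ℝ) (hc : 0 < c) (x y : E)
    (hx : c * ‖x‖ ^ 2 < 1) (hy : c * ‖y‖ ^ 2 < 1) :
    mobiusAdd c x (mobiusSmul c 0 (mobiusAdd c (-x) y)) = x ∧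
      mobiusAdd c x (mobiusSmul c 1 (mobiusAdd c (-x) y)) = y := by
  have hx' : c * ‖-x‖ ^ 2 < 1 := by rwa [norm_neg]
  refine ⟨by rw [mobiusSmul_zero_left, mobiusAdd_zero_right], ?_⟩
  rw [mobiusSmul_one_left hc (mul_norm_sq_mobiusAdd_lt hc.le hx' hy)]
  exact mobiusAdd_left_cancel hx.ne (mobiusAdd_denom_pos hc.le hx' hy).ne'
end
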